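/- arXiv:2405.12700 — 11 statements merged into one kernel-verified Lean document; each statement's English description precedes it below -/
import Mathlib

section
/- Let X be a finite set, ω a distribution on X, and p₁, …, pₙ factors on X with ω ⊨ pᵢ > 0 for each i. Define ω' := Σᵢ (1/n)·(ω|pᵢ), the uniform convex combination of the Bayesian updates. Then ∏ᵢ (ω' ⊨ pᵢ) ≥ ∏ᵢ (ω ⊨ pᵢ). -/
noncomputable section

/-- The validity `ω ⊨ p` of a factor `p` in a distribution `ω` on a finite set. -/
def val {X : Type*} [Fintype X] (ω p : X → ℝ) : ℝ := ∑ x, ω x * p x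

/-- The Bayesian update `ω|p` of a distribution `ω` with a factor `p`. -/
def upd {X : Type*} [Fintype X] (ω p : X → ℝ) : X → ℝ := fun x => ω x * p x / val ω p

/-- `b ^ (∑ e i) = ∏ b ^ e i` for `0 ≤ b` and nonnegative exponents. -/
lemma rpow_finset_sum {b : ℝ} (hb : 0 ≤ b) {ι : Type*} (t : Finset ι) (e : ι → ℝ)
    (he : ∀ i, 0 ≤ e i) : b ^ (∑ i ∈ t, e i) = ∏ i ∈ t, b ^ e i := by
  rcases hb.eq_or_lt with h0 | hpos
  · by_cases hall : ∀ i ∈ t, e i = 0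
    · rw [Finset.sum_eq_zero hall, Real.rpow_zero]
      exact (Finset.prod_eq_one fun i hi => by rw [hall i hi, Real.rpow_zero]).symm
    · push_neg at hall
      obtain ⟨i, hi, hei⟩ := hall
      have hsum : 0 < ∑ j ∈ t, e j :=
        Finset.sum_pos' (fun j _ => he j) ⟨i, hi, (he i).lt_of_ne (Ne.symm hei)⟩
      rw [← h0, Real.zero_rpow hsum.ne']
      exact (Finset.prod_eq_zero hi (Real.zero_rpow hei)).symm
  · rw [Real.rpow_def_of_pos hpos, Finset.mul_sum, Real.exp_sum]
    exact Finset.prod_congr rfl fun i _ => (Real.rpow_def_of_pos hpos _).symm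

/-- The uniform convex combination of the Bayesian updates increases the
product of the validities. -/
theorem convex_combination_update_increases_product_validity
    {X : Type*} [Fintype X] (n : ℕ) (ω : X → ℝ) (p : Fin n → X → ℝ)
    (hω0 : ∀ x, 0 ≤ ω x) (hω1 : ∑ x, ω x = 1)
    (hp : ∀ i x, 0 ≤ p i x)
    (hval : ∀ i, 0 < val ω (p i)) :
    ∏ i, val ω (p i) ≤
      ∏ i, val (fun x => ∑ j, ((1 : ℝ) / n) * upd ω (p j) x) (p i) := by
  rcases Nat.eq_zero_or_pos n with hn | hn
  · subst hn; simp
  have hnR : (0 : ℝ) < n := by exact_mod_cast hn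
  set a : Fin n → ℝ := fun i => val ω (p i) with ha
  -- the density of the new distribution w.r.t. ω
  set s : X → ℝ := fun x => ∑ j, (1 / n) * (p j x / a j) with hs
  have hs0 : ∀ x, 0 ≤ s x := fun x =>
    Finset.sum_nonneg fun j _ => mul_nonneg (by positivity)
      (div_nonneg (hp j x) (hval j).le)
  -- the new distribution is ω * s
  have hω' : ∀ x, (∑ j, ((1 : ℝ) / n) * upd ω (p j) x) = ω x * s x := by
    intro x
    rw [hs, Finset.mul_sum]
    refine Finset.sum_congr rfl fun j _ => ?_
    simp only [upd, ha]
    ring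
  -- weights μ i x := ω x * p i x / a i sum to 1 in x
  have hμsum : ∀ i, (∑ x, ω x * p i x / a i) = 1 := by
    intro i
    rw [← Finset.sum_div, ha]
    exact div_self (hval i).ne'
  -- ∑ x, ω x * s x = 1
  have hωs : (∑ x, ω x * s x) = 1 := by
    have : (∑ x, ω x * s x) = ∑ j, (1 / n : ℝ) * ((∑ x, ω x * p j x) / a j) := by
      rw [hs]
      simp_rw [Finset.mul_sum]
      rw [Finset.sum_comm]
      refine Finset.sum_congr rfl fun j _ => ?_
      simp only [Finset.mul_sum, Finset.sum_div]
      exact Finset.sum_congr rfl fun x _ => by ring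
    rw [this]
    have : ∀ j : Fin n, (1 / n : ℝ) * ((∑ x, ω x * p j x) / a j) = 1 / n := by
      intro j
      show (1 / n : ℝ) * (val ω (p j) / val ω (p j)) = 1 / n
      rw [div_self (hval j).ne', mul_one]
    rw [Finset.sum_congr rfl fun j _ => this j, Finset.sum_const, Finset.card_univ,
      Fintype.card_fin, nsmul_eq_mul]
    field_simp
  -- Q := geometric mean of s with weights ω * s
  set Q : ℝ := ∏ x, s x ^ (ω x * s x) with hQ
  have hQpos : 0 < Q := by
    refine Finset.prod_pos fun x _ => ?_
    rcases (hs0 x).eq_or_lt with h | h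
    · rw [← h, mul_zero, Real.rpow_zero]; exact one_pos
    · exact Real.rpow_pos_of_pos h _
  have hQ1 : 1 ≤ Q := by
    -- apply AM-GM to s⁻¹ with weights ω * s
    have key := Real.geom_mean_le_arith_mean_weighted Finset.univ
      (fun x => ω x * s x) (fun x => (s x)⁻¹)
      (fun x _ => mul_nonneg (hω0 x) (hs0 x)) hωs
      (fun x _ => inv_nonneg.2 (hs0 x))
    have hinv : (∏ x, ((s x)⁻¹) ^ (ω x * s x)) = Q⁻¹ := by
      rw [hQ, ← Finset.prod_inv_distrib]
      exact Finset.prod_congr rfl fun x _ => Real.inv_rpow (hs0 x) _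
    have hsum_le : (∑ x, (ω x * s x) * (s x)⁻¹) ≤ 1 := by
      rw [← hω1]
      refine Finset.sum_le_sum fun x _ => ?_
      rcases (hs0 x).eq_or_lt with h | h
      · rw [← h]; simp [hω0 x]
      · rw [mul_assoc, mul_inv_cancel₀ h.ne', mul_one]
    have : Q⁻¹ ≤ 1 := hinv ▸ key.trans hsum_le
    have h1 : Q * Q⁻¹ = 1 := mul_inv_cancel₀ hQpos.ne'
    nlinarith [this, hQpos, h1]
  -- per-factor AM-GM bound
  have hstep : ∀ i : Fin n, a i * ∏ x, s x ^ (ω x * p i x / a i) ≤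
      val (fun x => ∑ j, ((1 : ℝ) / n) * upd ω (p j) x) (p i) := by
    intro i
    have hgm := Real.geom_mean_le_arith_mean_weighted Finset.univ
      (fun x => ω x * p i x / a i) s
      (fun x _ => div_nonneg (mul_nonneg (hω0 x) (hp i x)) (hval i).le)
      (hμsum i) (fun x _ => hs0 x)
    have hval' : val (fun x => ∑ j, ((1 : ℝ) / n) * upd ω (p j) x) (p i)
        = a i * ∑ x, (ω x * p i x / a i) * s x := by
      rw [val, Finset.mul_sum]
      refine Finset.sum_congr rfl fun x _ => ?_
      rw [hω' x]
      have hai : a i ≠ 0 := (hval i).ne'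
      field_simp
    rw [hval']
    exact mul_le_mul_of_nonneg_left hgm (hval i).le
  -- combine
  calc ∏ i, val ω (p i) = (∏ i, a i) * 1 := by rw [mul_one]
    _ ≤ (∏ i, a i) * Q ^ n := by
        refine mul_le_mul_of_nonneg_left (one_le_pow₀ hQ1) ?_
        exact Finset.prod_nonneg fun i _ => (hval i).le
    _ = ∏ i, (a i * ∏ x, s x ^ (ω x * p i x / a i)) := by
        rw [Finset.prod_mul_distrib]
        congr 1
        rw [Finset.prod_comm, ← Finset.prod_pow]
        refine Finset.prod_congr rfl fun x _ => ?_
        rw [← rpow_finset_sum (hs0 x) _ _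
          (fun i => div_nonneg (mul_nonneg (hω0 x) (hp i x)) (hval i).le),
          ← Real.rpow_natCast (s x ^ (ω x * s x)) n, ← Real.rpow_mul (hs0 x)]
        congr 1
        have hn0 : (n : ℝ) ≠ 0 := hnR.ne'
        simp only [hs, Finset.mul_sum, Finset.sum_mul]
        refine Finset.sum_congr rfl fun i _ => ?_
        have hai : a i ≠ 0 := (hval i).ne'
        field_simp
        ring
        have h1 : a i * (val ω (p i))⁻¹ = 1 := mul_inv_cancel₀ hai
        rw [mul_assoc _ (a i), h1, mul_one]
    _ ≤ _ := Finset.prod_le_prod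
        (fun i _ => mul_nonneg (hval i).le
          (Finset.prod_nonneg fun x _ => Real.rpow_nonneg (hs0 x) _))
        (fun i _ => hstep i)
end
end

section
/- Let X and Y be finite sets and F : X × Y → ℝ a function with F(x,y) > 0 for all x, y. Write F₁(x) := Σ_{y∈Y} F(x,y) and G(x,z) := Σ_{y∈Y} F(x,y)·ln(F(z,y)). If x, x' ∈ X satisfy G(x,x') ≥ G(x,x), then F₁(x') ≥ F₁(x). -/
/-! Weighting `log t ≤ t - 1` at `t = F(x',y)/F(x,y)` by `F(x,y)` gives
`F(x,y) ln F(x',y) - F(x,y) ln F(x,y) ≤ F(x',y) - F(x,y)`; summing over `y`,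
the left side is `G(x,x') - G(x,x) ≥ 0`. -/

open Real Finset

theorem mul_log_sub_mul_log_le_sub {a b : ℝ} (ha : 0 ≤ a) (hb : 0 < b) :
    a * log b - a * log a ≤ b - a := by
  rcases ha.eq_or_lt with rfl | ha
  · simpa using hb.le
  calc a * log b - a * log a = a * log (b / a) := by
        rw [log_div hb.ne' ha.ne']; ring
    _ ≤ a * (b / a - 1) := mul_le_mul_of_nonneg_left (log_le_sub_one_of_pos (by positivity)) ha.le
    _ = b - a := by field_simp

theorem Finset.sum_le_sum_of_sum_mul_log_le {ι : Type*} (s : Finset ι) {p q : ι → ℝ}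
    (hp : ∀ i ∈ s, 0 ≤ p i) (hq : ∀ i ∈ s, 0 < q i)
    (h : ∑ i ∈ s, p i * log (p i) ≤ ∑ i ∈ s, p i * log (q i)) :
    ∑ i ∈ s, p i ≤ ∑ i ∈ s, q i := by
  have hterm := sum_le_sum fun i hi => mul_log_sub_mul_log_le_sub (hp i hi) (hq i hi)
  rw [sum_sub_distrib, sum_sub_distrib] at hterm
  linarith

theorem sum_increase_lemma_general
    {X Y : Type*} [Fintype Y] (F : X → Y → ℝ)
    (hF : ∀ x y, 0 < F x y) (x x' : X)
    (h : ∑ y, F x y * Real.log (F x y) ≤ ∑ y, F x y * Real.log (F x' y)) :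
    ∑ y, F x y ≤ ∑ y, F x' y :=
  univ.sum_le_sum_of_sum_mul_log_le (fun y _ => (hF x y).le) (fun y _ => hF x' y) h

/-- The sum-increase lemma: if the auxiliary expectation
`G(x,z) = Σ_y F(x,y)·ln(F(z,y))` satisfies `G(x,x') ≥ G(x,x)`, then
`F₁(x') = Σ_y F(x',y) ≥ Σ_y F(x,y) = F₁(x)`. -/
theorem sum_increase_lemma
    {X Y : Type*} [Fintype X] [Fintype Y] (F : X → Y → ℝ)
    (hF : ∀ x y, 0 < F x y) (x x' : X)
    (h : ∑ y, F x y * Real.log (F x y) ≤ ∑ y, F x y * Real.log (F x' y)) :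
    ∑ y, F x y ≤ ∑ y, F x' y :=
  sum_increase_lemma_general F hF x x' h
end

section
/- Let X be a finite set, ω a distribution on X, and ψ a nonempty finite multiset of predicates on X that matches, i.e. Σ_{p∈supp(ψ)} p(x) ≤ 1 for every x ∈ X. Then both the Jeffrey validity and the Pearl validity of ψ in ω are at most 1: ω ⊨_J ψ ≤ 1 and ω ⊨_P ψ ≤ 1. -/
/-! Both validities are single terms of a multinomial expansion `(∑ i, a i) ^ n` with nonnegative
`a i` summing to at most 1. For Jeffrey, `a p = ω ⊨ p` and `∑ p, ω ⊨ p = ω ⊨ ∑ p, p ≤ 1` by matching;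
for Pearl, `a p = p x` at each point `x`, and the pointwise bound survives averaging over `ω`. -/

noncomputable section

/-- The Jeffrey validity `ω ⊨_J ψ` of an evidence multiset `ψ` in `ω`. -/
def jeffreyVal {X : Type*} [Fintype X] [DecidableEq (X → ℝ)]
    (ω : X → ℝ) (ψ : Multiset (X → ℝ)) : ℝ :=
  (Nat.multinomial ψ.toFinset ψ.count : ℝ) * ∏ p ∈ ψ.toFinset, (val ω p) ^ ψ.count p

/-- The conjunction `&ψ` of an evidence multiset `ψ`. -/
def conjM {X : Type*} [DecidableEq (X → ℝ)] (ψ : Multiset (X → ℝ)) : X → ℝ :=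
  fun x => ∏ p ∈ ψ.toFinset, p x ^ ψ.count p

/-- The Pearl validity `ω ⊨_P ψ` of an evidence multiset `ψ` in `ω`. -/
def pearlVal {X : Type*} [Fintype X] [DecidableEq (X → ℝ)]
    (ω : X → ℝ) (ψ : Multiset (X → ℝ)) : ℝ :=
  (Nat.multinomial ψ.toFinset ψ.count : ℝ) * val ω (conjM ψ)

theorem Nat.multinomial_mul_prod_pow_le_sum_pow {α R : Type*} [CommSemiring R] [PartialOrder R]
    [IsOrderedRing R] (s : Finset α) (k : α → ℕ) {a : α → R} (ha : ∀ i ∈ s, 0 ≤ a i) :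
    (Nat.multinomial s k : R) * ∏ i ∈ s, a i ^ k i ≤ (∑ i ∈ s, a i) ^ ∑ i ∈ s, k i := by
  classical
  -- `k` vanishes off `s` after this change, as membership in `piAntidiag` demands
  set k' : α → ℕ := fun i => if i ∈ s then k i else 0
  have hk' : ∀ i ∈ s, k i = k' i := fun i hi => (if_pos hi).symm
  rw [Nat.multinomial_congr hk', Finset.prod_congr rfl fun i hi => by rw [hk' i hi],
    Finset.sum_congr rfl hk', Finset.sum_pow_eq_sum_piAntidiag]
  refine Finset.single_le_sum (f := fun k => (Nat.multinomial s k : R) * ∏ i ∈ s, a i ^ k i)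
    (fun _ _ => mul_nonneg (Nat.cast_nonneg _) (Finset.prod_nonneg fun i hi => pow_nonneg (ha i hi) _))
    (Finset.mem_piAntidiag.2 ⟨rfl, fun i hi => by_contra fun his => hi (if_neg his)⟩)

theorem Nat.multinomial_mul_prod_pow_le_one {α R : Type*} [CommSemiring R] [PartialOrder R]
    [IsOrderedRing R] (s : Finset α) (k : α → ℕ) {a : α → R} (ha : ∀ i ∈ s, 0 ≤ a i)
    (hsum : ∑ i ∈ s, a i ≤ 1) :
    (Nat.multinomial s k : R) * ∏ i ∈ s, a i ^ k i ≤ 1 :=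
  (Nat.multinomial_mul_prod_pow_le_sum_pow s k ha).trans
    (pow_le_one₀ (Finset.sum_nonneg ha) hsum)

section Validity

variable {X : Type*} [Fintype X] {ω : X → ℝ}

theorem val_nonneg (hω : ∀ x, 0 ≤ ω x) {p : X → ℝ} (hp : ∀ x, 0 ≤ p x) : 0 ≤ val ω p :=
  Finset.sum_nonneg fun x _ => mul_nonneg (hω x) (hp x)

theorem val_le_one (hω0 : ∀ x, 0 ≤ ω x) (hω1 : ∑ x, ω x = 1) {p : X → ℝ} (hp : ∀ x, p x ≤ 1) :
    val ω p ≤ 1 :=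
  hω1 ▸ Finset.sum_le_sum fun x _ => mul_le_of_le_one_right (hω0 x) (hp x)

theorem val_sum {ι : Type*} (s : Finset ι) (p : ι → X → ℝ) :
    val ω (∑ i ∈ s, p i) = ∑ i ∈ s, val ω (p i) := by
  simp only [val, Finset.sum_apply, Finset.mul_sum]
  exact Finset.sum_comm

theorem val_const_mul (c : ℝ) (p : X → ℝ) : val ω (fun x => c * p x) = c * val ω p := by
  simp only [val, Finset.mul_sum]
  exact Finset.sum_congr rfl fun x _ => by ring

end Validity

theorem matching_evidence_validities_le_one_general
    {X : Type*} [Fintype X] [DecidableEq (X → ℝ)]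
    (ω : X → ℝ) (ψ : Multiset (X → ℝ))
    (hω0 : ∀ x, 0 ≤ ω x) (hω1 : ∑ x, ω x = 1)
    (hpred : ∀ p ∈ ψ, ∀ x, 0 ≤ p x ∧ p x ≤ 1)
    (hmatch : ∀ x, ∑ p ∈ ψ.toFinset, p x ≤ 1) :
    jeffreyVal ω ψ ≤ 1 ∧ pearlVal ω ψ ≤ 1 := by
  have hnonneg : ∀ p ∈ ψ.toFinset, ∀ x, 0 ≤ p x := fun p hp x =>
    (hpred p (Multiset.mem_toFinset.1 hp) x).1
  constructor
  · refine Nat.multinomial_mul_prod_pow_le_one _ _ (fun p hp => val_nonneg hω0 (hnonneg p hp)) ?_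
    rw [← val_sum]
    exact val_le_one hω0 hω1 fun x => by simpa only [Finset.sum_apply] using hmatch x
  · rw [pearlVal, ← val_const_mul]
    exact val_le_one hω0 hω1 fun x =>
      Nat.multinomial_mul_prod_pow_le_one _ _ (fun p hp => hnonneg p hp x) (hmatch x)

/-- For matching evidence, both the Jeffrey and the Pearl validity are at most 1. -/
theorem matching_evidence_validities_le_one
    {X : Type*} [Fintype X] [DecidableEq (X → ℝ)]
    (ω : X → ℝ) (ψ : Multiset (X → ℝ))
    (hω0 : ∀ x, 0 ≤ ω x) (hω1 : ∑ x, ω x = 1)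
    (hψ : ψ ≠ 0)
    (hpred : ∀ p ∈ ψ, ∀ x, 0 ≤ p x ∧ p x ≤ 1)
    (hmatch : ∀ x, ∑ p ∈ ψ.toFinset, p x ≤ 1) :
    jeffreyVal ω ψ ≤ 1 ∧ pearlVal ω ψ ≤ 1 :=
  matching_evidence_validities_le_one_general ω ψ hω0 hω1 hpred hmatch
end
end

section
/- Let X be a finite set, ω a distribution on X, and P a finite set of predicates on X with Σ_{p∈P} p(x) = 1 for every x ∈ X. Then for each K ≥ 1, the Jeffrey validities of all size-K evidence multisets over P sum to one, Σ_{φ∈M[K](P)} (ω ⊨_J φ) = 1, and likewise the Pearl validities sum to one, Σ_{φ∈M[K](P)} (ω ⊨_P φ) = 1. -/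
noncomputable section

lemma multiset_multinomial_eq {α : Type*} [DecidableEq α] (m : Multiset α) :
    m.countPerms = Nat.multinomial m.toFinset m.count := by
  rw [Multiset.countPerms, Finsupp.multinomial_eq, Multiset.toFinsupp_support]
  unfold Nat.multinomial
  simp [Multiset.toFinsupp_apply]

lemma key {α : Type*} [DecidableEq α] (P : Finset α) (K : ℕ) (f : α → ℝ) :
    (∑ p ∈ P, f p) ^ K =
      ∑ φ ∈ P.sym K, (Nat.multinomial (φ : Multiset α).toFinset (φ : Multiset α).count : ℝ) *
        ∏ p ∈ (φ : Multiset α).toFinset, f p ^ (φ : Multiset α).count p := by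
  rw [Finset.sum_pow]
  refine Finset.sum_congr rfl fun φ _ => ?_
  rw [← multiset_multinomial_eq, Finset.prod_multiset_map_count]
  rfl

/-- For a finite set `P` of predicates adding up to one, the Jeffrey validities of
all size-`K` evidence multisets over `P` sum to one, and likewise the Pearl
validities sum to one. -/
theorem perfectly_matching_validities_sum_to_one
    {X : Type*} [Fintype X] [DecidableEq (X → ℝ)]
    (ω : X → ℝ) (P : Finset (X → ℝ)) (K : ℕ)
    (hω0 : ∀ x, 0 ≤ ω x) (hω1 : ∑ x, ω x = 1)
    (hpred : ∀ p ∈ P, ∀ x, 0 ≤ p x ∧ p x ≤ 1)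
    (hsum : ∀ x, ∑ p ∈ P, p x = 1)
    (hK : 1 ≤ K) :
    (∑ φ ∈ P.sym K, jeffreyVal ω (φ : Multiset (X → ℝ))) = 1 ∧
    (∑ φ ∈ P.sym K, pearlVal ω (φ : Multiset (X → ℝ))) = 1 := by
  have hvone : ∑ p ∈ P, val ω p = 1 := by
    simp only [val]
    rw [Finset.sum_comm]
    simp only [← Finset.mul_sum, hsum, mul_one, hω1]
  constructor
  · rw [show (∑ φ ∈ P.sym K, jeffreyVal ω (φ : Multiset (X → ℝ))) =
        (∑ p ∈ P, val ω p) ^ K from (key P K (val ω)).symm ▸ rfl]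
    · rw [hvone, one_pow]
  · have : ∀ φ ∈ P.sym K, pearlVal ω (φ : Multiset (X → ℝ)) =
        ∑ x, ω x * ((Nat.multinomial (φ : Multiset (X → ℝ)).toFinset
          (φ : Multiset (X → ℝ)).count : ℝ) *
          ∏ p ∈ (φ : Multiset (X → ℝ)).toFinset, p x ^ (φ : Multiset (X → ℝ)).count p) := by
      intro φ _
      rw [pearlVal, val, Finset.mul_sum]
      refine Finset.sum_congr rfl fun x _ => ?_
      rw [conjM]; ring
    rw [Finset.sum_congr rfl this, Finset.sum_comm]
    have : ∀ x : X, (∑ φ ∈ P.sym K, ω x * ((Nat.multinomial (φ : Multiset (X → ℝ)).toFinset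
        (φ : Multiset (X → ℝ)).count : ℝ) *
        ∏ p ∈ (φ : Multiset (X → ℝ)).toFinset, p x ^ (φ : Multiset (X → ℝ)).count p)) = ω x := by
      intro x
      rw [← Finset.mul_sum, ← key P K (fun p => p x), hsum, one_pow, mul_one]
    rw [Finset.sum_congr rfl (fun x _ => this x), hω1]
end
end

section
/- Let X be a finite set and ψ a nonempty multiset over X of size K, identified with point evidence. Then the frequentist-learning distribution Flrn(ψ) maximises Jeffrey validity of ψ among all distributions on X: for every distribution ω on X, ω ⊨_J ψ ≤ Flrn(ψ) ⊨_J ψ, i.e. (ψ)·∏_x ω(x)^{ψ(x)} ≤ (ψ)·∏_x (ψ(x)/K)^{ψ(x)}. -/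
noncomputable section

open Finset

lemma flrn_aux {X : Type*} [Fintype X] [DecidableEq X]
    (ψ : Multiset X) (K : ℕ) (hψ : ψ ≠ 0) (hcard : Multiset.card ψ = K)
    (ω : X → ℝ) (hω0 : ∀ x, 0 ≤ ω x) (hω1 : ∑ x, ω x = 1) :
    ∏ x : X, (ω x) ^ ψ.count x ≤ ∏ x : X, ((ψ.count x : ℝ) / K) ^ ψ.count x := by
  set n : X → ℕ := fun x => ψ.count x with hn
  have hKsum : (∑ x : X, n x) = K := by
    rw [← hcard, ← Multiset.toFinset_sum_count_eq]
    exact (Finset.sum_subset (Finset.subset_univ _) (by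
      intro x _ hx
      simpa [hn, Multiset.count_eq_zero] using hx)).symm
  have hK0 : 0 < K := by
    rcases Multiset.exists_mem_of_ne_zero hψ with ⟨a, ha⟩
    have h1 : 0 < n a := by simpa [hn, Multiset.count_pos] using ha
    have h2 : n a ≤ ∑ x : X, n x := Finset.single_le_sum (fun i _ => Nat.zero_le _) (Finset.mem_univ a)
    omega
  have hKR : (0:ℝ) < K := by exact_mod_cast hK0
  set w : X → ℝ := fun x => (n x : ℝ) / K with hw
  set z : X → ℝ := fun x => if n x = 0 then 0 else (K : ℝ) * ω x / n x with hz
  have hznn : ∀ x, 0 ≤ z x := by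
    intro x
    simp only [hz]
    split
    · exact le_refl 0
    · exact div_nonneg (mul_nonneg (Nat.cast_nonneg _) (hω0 x)) (Nat.cast_nonneg _)
  have hwsum : ∑ x : X, w x = 1 := by
    simp only [hw, ← Finset.sum_div]
    rw [← Nat.cast_sum, hKsum, div_self hKR.ne']
  have h1 : ∏ x : X, z x ^ w x ≤ ∑ x : X, w x * z x :=
    Real.geom_mean_le_arith_mean_weighted univ w z
      (fun i _ => by positivity) hwsum (fun i _ => hznn i)
  have h2 : ∑ x : X, w x * z x ≤ 1 := by
    rw [← hω1]
    apply Finset.sum_le_sum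
    intro x _
    simp only [hw, hz]
    by_cases h : n x = 0
    · simp [h, hω0 x]
    · have hx : (0:ℝ) < n x := by
        have : 0 < n x := Nat.pos_of_ne_zero h
        exact_mod_cast this
      rw [if_neg h]
      have : (n x : ℝ) / K * ((K:ℝ) * ω x / n x) = ω x := by
        field_simp
      rw [this]
  have h3 : ∏ x : X, z x ^ (n x) ≤ 1 := by
    have hb : ∏ x : X, z x ^ w x ≤ 1 := h1.trans h2
    have hnn : (0:ℝ) ≤ ∏ x : X, z x ^ w x :=
      Finset.prod_nonneg fun x _ => Real.rpow_nonneg (hznn x) _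
    have hpow : (∏ x : X, z x ^ w x) ^ K ≤ 1 := pow_le_one₀ hnn hb
    calc ∏ x : X, z x ^ n x = (∏ x : X, z x ^ w x) ^ K := by
          rw [← Finset.prod_pow]
          refine Finset.prod_congr rfl fun x _ => ?_
          rw [← Real.rpow_natCast (z x ^ w x) K, ← Real.rpow_mul (hznn x),
            hw, div_mul_cancel₀ _ hKR.ne', Real.rpow_natCast]
      _ ≤ 1 := hpow
  have key : ∏ x : X, (ω x) ^ n x
      = (∏ x : X, z x ^ n x) * ∏ x : X, ((n x : ℝ) / K) ^ n x := by
    rw [← Finset.prod_mul_distrib]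
    refine Finset.prod_congr rfl fun x _ => ?_
    by_cases h : n x = 0
    · simp [h]
    · have hx : (0:ℝ) < n x := by
        have : 0 < n x := Nat.pos_of_ne_zero h
        exact_mod_cast this
      rw [hz]
      simp only [if_neg h]
      rw [← mul_pow]
      congr 1
      field_simp
  rw [key]
  have hprodnn : (0:ℝ) ≤ ∏ x : X, ((n x : ℝ) / K) ^ n x :=
    Finset.prod_nonneg fun x _ => by positivity
  calc (∏ x : X, z x ^ n x) * ∏ x : X, ((n x : ℝ) / K) ^ n x
      ≤ 1 * ∏ x : X, ((n x : ℝ) / K) ^ n x :=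
        mul_le_mul_of_nonneg_right h3 hprodnn
    _ = _ := one_mul _

/-- Frequentist learning maximises the Jeffrey validity of point evidence:
for any distribution `ω`, `(ψ)·∏_x ω(x)^{ψ(x)} ≤ (ψ)·∏_x (ψ(x)/K)^{ψ(x)}`. -/
theorem flrn_maximises_jeffrey_validity
    {X : Type*} [Fintype X] [DecidableEq X]
    (ψ : Multiset X) (K : ℕ) (hψ : ψ ≠ 0) (hcard : Multiset.card ψ = K)
    (ω : X → ℝ)
    (hω0 : ∀ x, 0 ≤ ω x) (hω1 : ∑ x, ω x = 1) :
    (Nat.multinomial ψ.toFinset ψ.count : ℝ) * ∏ x : X, (ω x) ^ ψ.count x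
      ≤ (Nat.multinomial ψ.toFinset ψ.count : ℝ) *
          ∏ x : X, ((ψ.count x : ℝ) / K) ^ ψ.count x := by
  exact mul_le_mul_of_nonneg_left
    (flrn_aux ψ K hψ hcard ω hω0 hω1) (by positivity)
end
end

section
/- Let X be a finite set, φ a multiset over X of size K > 0, and ω, ω' distributions on X whose supports both equal the support of φ. Then ω ⊨_J φ ≤ ω' ⊨_J φ if and only if D_KL(Flrn(φ), ω) ≥ D_KL(Flrn(φ), ω'). -/
noncomputable section

/-- Kullback-Leibler divergence, with the convention `r·ln(r/s) = 0` when `r = 0`. -/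
def KL {X : Type*} [Fintype X] (σ ρ : X → ℝ) : ℝ :=
  ∑ x, if σ x = 0 then 0 else σ x * Real.log (σ x / ρ x)

lemma log_prod_pow {X : Type*} [Fintype X] (ω : X → ℝ) (c : X → ℕ)
    (h : ∀ x, c x ≠ 0 → 0 < ω x) :
    Real.log (∏ x : X, (ω x) ^ c x) = ∑ x : X, (c x : ℝ) * Real.log (ω x) := by
  rw [Real.log_prod]
  · refine Finset.sum_congr rfl fun x _ => ?_
    by_cases hc : c x = 0
    · simp [hc]
    · rw [Real.log_pow]
  · intro x _
    by_cases hc : c x = 0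
    · simp [hc]
    · exact pow_ne_zero _ (ne_of_gt (h x hc))

/-- Lower Jeffrey validity of point evidence corresponds to higher KL-divergence
from the normalised (frequentist) distribution of the evidence. -/
theorem jeffrey_validity_le_iff_KL_ge
    {X : Type*} [Fintype X] [DecidableEq X]
    (φ : Multiset X) (K : ℕ) (hK : 0 < K) (hcard : Multiset.card φ = K)
    (ω ω' : X → ℝ)
    (hω0 : ∀ x, 0 ≤ ω x) (hω1 : ∑ x, ω x = 1)
    (hω'0 : ∀ x, 0 ≤ ω' x) (hω'1 : ∑ x, ω' x = 1)
    (hsupp : ∀ x, ω x ≠ 0 ↔ φ.count x ≠ 0)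
    (hsupp' : ∀ x, ω' x ≠ 0 ↔ φ.count x ≠ 0) :
    ((Nat.multinomial φ.toFinset φ.count : ℝ) * ∏ x : X, (ω x) ^ φ.count x
        ≤ (Nat.multinomial φ.toFinset φ.count : ℝ) * ∏ x : X, (ω' x) ^ φ.count x)
      ↔ KL (fun x => (φ.count x : ℝ) / K) ω' ≤ KL (fun x => (φ.count x : ℝ) / K) ω := by
  set c : X → ℕ := fun x => φ.count x with hc
  have hKR : (0:ℝ) < K := by exact_mod_cast hK
  have hωpos : ∀ x, c x ≠ 0 → 0 < ω x := fun x hx =>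
    lt_of_le_of_ne (hω0 x) (Ne.symm ((hsupp x).2 hx))
  have hω'pos : ∀ x, c x ≠ 0 → 0 < ω' x := fun x hx =>
    lt_of_le_of_ne (hω'0 x) (Ne.symm ((hsupp' x).2 hx))
  have hPpos : 0 < ∏ x : X, (ω x) ^ c x := by
    apply Finset.prod_pos
    intro x _
    by_cases hx : c x = 0
    · simp [hx]
    · exact pow_pos (hωpos x hx) _
  have hP'pos : 0 < ∏ x : X, (ω' x) ^ c x := by
    apply Finset.prod_pos
    intro x _
    by_cases hx : c x = 0
    · simp [hx]
    · exact pow_pos (hω'pos x hx) _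
  have hMpos : (0:ℝ) < (Nat.multinomial φ.toFinset φ.count : ℝ) := by
    exact_mod_cast Nat.multinomial_pos _ _
  have key : KL (fun x => (c x : ℝ) / K) ω - KL (fun x => (c x : ℝ) / K) ω'
      = (1 / K) * (Real.log (∏ x : X, (ω' x) ^ c x) - Real.log (∏ x : X, (ω x) ^ c x)) := by
    rw [log_prod_pow ω' c hω'pos, log_prod_pow ω c hωpos]
    rw [KL, KL, ← Finset.sum_sub_distrib, ← Finset.sum_sub_distrib, Finset.mul_sum]
    refine Finset.sum_congr rfl fun x _ => ?_
    by_cases hx : c x = 0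
    · simp [hx]
    · have hσ : ((c x : ℝ) / K) ≠ 0 := by
        apply div_ne_zero
        · exact_mod_cast hx
        · exact ne_of_gt hKR
      have hωx := hωpos x hx
      have hω'x := hω'pos x hx
      simp only [hσ, if_neg, ↓reduceIte]
      rw [Real.log_div hσ (ne_of_gt hωx), Real.log_div hσ (ne_of_gt hω'x)]
      field_simp
      ring
  constructor
  · intro h
    have hPP' : ∏ x : X, (ω x) ^ c x ≤ ∏ x : X, (ω' x) ^ c x :=
      le_of_mul_le_mul_left h hMpos
    have hlog : Real.log (∏ x : X, (ω x) ^ c x) ≤ Real.log (∏ x : X, (ω' x) ^ c x) :=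
      Real.log_le_log hPpos hPP'
    have : 0 ≤ KL (fun x => (c x : ℝ) / K) ω - KL (fun x => (c x : ℝ) / K) ω' := by
      rw [key]
      exact mul_nonneg (by positivity) (sub_nonneg.2 hlog)
    linarith
  · intro h
    have h0 : 0 ≤ KL (fun x => (c x : ℝ) / K) ω - KL (fun x => (c x : ℝ) / K) ω' := by
      linarith
    rw [key] at h0
    have h1 : (0:ℝ) < 1 / K := by positivity
    have hlog : Real.log (∏ x : X, (ω x) ^ c x) ≤ Real.log (∏ x : X, (ω' x) ^ c x) := by
      by_contra hcon
      push_neg at hcon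
      have := mul_neg_of_pos_of_neg h1 (sub_neg.2 hcon)
      linarith
    have hPP' : ∏ x : X, (ω x) ^ c x ≤ ∏ x : X, (ω' x) ^ c x :=
      (Real.log_le_log_iff hPpos hP'pos).1 hlog
    exact mul_le_mul_of_nonneg_left hPP' (le_of_lt hMpos)
end
end

section
/- Let X be a finite set, ω a distribution on X, and ψ a nonempty finite multiset of factors on X with ω ⊨ p > 0 for every p ∈ supp(ψ). Then the Jeffrey update increases Jeffrey validity: (ω ⊳_J ψ) ⊨_J ψ ≥ ω ⊨_J ψ. -/
noncomputable section

/-- The Jeffrey update `ω ⊳_J ψ`, the `Flrn(ψ)`-convex combination of the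
Bayesian updates of `ω` with the factors in `ψ`. -/
def jUpd {X : Type*} [Fintype X] [DecidableEq (X → ℝ)]
    (ω : X → ℝ) (ψ : Multiset (X → ℝ)) : X → ℝ :=
  fun x => ∑ p ∈ ψ.toFinset, ((ψ.count p : ℝ) / (Multiset.card ψ)) * upd ω p x

/-- Jeffrey updating increases Jeffrey validity. -/
theorem jeffrey_update_increases_jeffrey_validity
    {X : Type*} [Fintype X] [DecidableEq (X → ℝ)]
    (ω : X → ℝ) (ψ : Multiset (X → ℝ))
    (hω0 : ∀ x, 0 ≤ ω x) (hω1 : ∑ x, ω x = 1)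
    (hψ : ψ ≠ 0)
    (hfac : ∀ p ∈ ψ, ∀ x, 0 ≤ p x)
    (hval : ∀ p ∈ ψ, 0 < val ω p) :
    jeffreyVal ω ψ ≤ jeffreyVal (jUpd ω ψ) ψ := by
  classical
  set s : Finset (X → ℝ) := ψ.toFinset with hs
  set N : ℕ := Multiset.card ψ with hN
  have hN0 : 0 < N := Multiset.card_pos.mpr hψ
  have hNR : (0:ℝ) < N := by exact_mod_cast hN0
  -- weights
  set r : (X → ℝ) → ℝ := fun p => (ψ.count p : ℝ) / N with hr
  have hr0 : ∀ p, 0 ≤ r p := fun p => by positivity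
  have hrsum : ∑ p ∈ s, r p = 1 := by
    rw [← Finset.sum_div]
    rw [show ∑ p ∈ s, (ψ.count p : ℝ) = (N : ℝ) by
      exact_mod_cast congrArg Nat.cast (ψ.toFinset_sum_count_eq)]
    field_simp
  have hmem : ∀ p ∈ s, p ∈ ψ := fun p hp => Multiset.mem_toFinset.mp hp
  -- the "density" of the Jeffrey update w.r.t. ω
  set t : X → ℝ := fun x => ∑ p ∈ s, r p * (p x / val ω p) with ht
  have ht0 : ∀ x, 0 ≤ t x := by
    intro x
    apply Finset.sum_nonneg
    intro p hp
    have := hfac p (hmem p hp) x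
    have := (hval p (hmem p hp)).le
    positivity
  have hjU : ∀ x, jUpd ω ψ x = ω x * t x := by
    intro x
    rw [jUpd, ht, Finset.mul_sum]
    apply Finset.sum_congr rfl
    intro p hp
    rw [upd]
    ring
  have hjU0 : ∀ x, 0 ≤ jUpd ω ψ x := by
    intro x
    rw [hjU x]
    exact mul_nonneg (hω0 x) (ht0 x)
  -- conditional distributions μ_p
  set μ : (X → ℝ) → X → ℝ := fun p x => ω x * p x / val ω p with hμ
  have hμ0 : ∀ p ∈ s, ∀ x, 0 ≤ μ p x := by
    intro p hp x
    have := hfac p (hmem p hp) x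
    have := (hval p (hmem p hp)).le
    have := hω0 x
    positivity
  have hμsum : ∀ p ∈ s, ∑ x, μ p x = 1 := by
    intro p hp
    rw [hμ]
    simp only
    rw [← Finset.sum_div]
    rw [show ∑ x, ω x * p x = val ω p from rfl]
    field_simp [(hval p (hmem p hp)).ne']
  -- val of the update in terms of A p := ∑ x, μ p x * t x
  set A : (X → ℝ) → ℝ := fun p => ∑ x, μ p x * t x with hA
  have hA0 : ∀ p ∈ s, 0 ≤ A p :=
    fun p hp => Finset.sum_nonneg fun x _ => mul_nonneg (hμ0 p hp x) (ht0 x)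
  have hvalU : ∀ p ∈ s, val (jUpd ω ψ) p = val ω p * A p := by
    intro p hp
    rw [val, hA]
    simp only
    rw [Finset.mul_sum]
    apply Finset.sum_congr rfl
    intro x _
    rw [hjU x, hμ]
    have hv := (hval p (hmem p hp)).ne'
    field_simp
  -- ω' sums to the weights: ∑_p r p * μ p x = jUpd x
  have hsum_weights : ∀ x, ∑ p ∈ s, r p * μ p x = jUpd ω ψ x := by
    intro x
    rw [jUpd]
    apply Finset.sum_congr rfl
    intro p hp
    rw [upd, hμ]
  have hω'sum : ∑ x, jUpd ω ψ x = 1 := by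
    rw [show ∑ x, jUpd ω ψ x = ∑ x, ∑ p ∈ s, r p * μ p x by
      exact Finset.sum_congr rfl fun x _ => (hsum_weights x).symm]
    rw [Finset.sum_comm]
    calc ∑ p ∈ s, ∑ x, r p * μ p x = ∑ p ∈ s, r p := by
          apply Finset.sum_congr rfl
          intro p hp
          rw [← Finset.mul_sum, hμsum p hp, mul_one]
      _ = 1 := hrsum
  -- Step 1: AM-GM for each p:  ∏_x (t x) ^ (μ p x) ≤ A p
  have step1 : ∀ p ∈ s, (∏ x, t x ^ (μ p x)) ≤ A p := by
    intro p hp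
    have := Real.geom_mean_le_arith_mean_weighted Finset.univ (μ p) t
      (fun x _ => hμ0 p hp x) (hμsum p hp) (fun x _ => ht0 x)
    simpa [hA, mul_comm] using this
  -- Step 2:  ∏_x (t x) ^ (jUpd x)  ≤  ∏_p (A p) ^ (r p)
  have step2 : (∏ x, t x ^ (jUpd ω ψ x)) ≤ ∏ p ∈ s, (A p) ^ (r p) := by
    have key : (∏ x, t x ^ (jUpd ω ψ x)) = ∏ p ∈ s, (∏ x, t x ^ (μ p x)) ^ (r p) := by
      calc (∏ x, t x ^ (jUpd ω ψ x))
          = ∏ x, t x ^ (∑ p ∈ s, r p * μ p x) := by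
            apply Finset.prod_congr rfl
            intro x _
            rw [hsum_weights x]
        _ = ∏ x, ∏ p ∈ s, t x ^ (r p * μ p x) := by
            apply Finset.prod_congr rfl
            intro x _
            exact Real.rpow_sum_of_nonneg (ht0 x)
              (fun p hp => mul_nonneg (hr0 p) (hμ0 p hp x))
        _ = ∏ p ∈ s, ∏ x, t x ^ (r p * μ p x) := Finset.prod_comm
        _ = ∏ p ∈ s, (∏ x, t x ^ (μ p x)) ^ (r p) := by
            apply Finset.prod_congr rfl
            intro p hp
            rw [← Real.finset_prod_rpow _ _ (fun x _ => Real.rpow_nonneg (ht0 x) _) (r p)]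
            apply Finset.prod_congr rfl
            intro x _
            rw [← Real.rpow_mul (ht0 x), mul_comm (r p) (μ p x)]
    rw [key]
    apply Finset.prod_le_prod
    · intro p hp
      exact Real.rpow_nonneg (Finset.prod_nonneg fun x _ => Real.rpow_nonneg (ht0 x) _) _
    · intro p hp
      exact Real.rpow_le_rpow (Finset.prod_nonneg fun x _ => Real.rpow_nonneg (ht0 x) _)
        (step1 p hp) (hr0 p)
  -- Step 3:  1 ≤ ∏_x (t x) ^ (jUpd x)   (Gibbs)
  have step3 : (1:ℝ) ≤ ∏ x, t x ^ (jUpd ω ψ x) := by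
    set z : X → ℝ := fun x => if t x = 0 then 0 else (t x)⁻¹ with hz
    have hz0 : ∀ x, 0 ≤ z x := by
      intro x
      rw [hz]
      simp only
      split
      · exact le_refl 0
      · exact inv_nonneg.mpr (ht0 x)
    have hB : (∏ x, z x ^ (jUpd ω ψ x)) ≤ 1 := by
      have := Real.geom_mean_le_arith_mean_weighted Finset.univ (jUpd ω ψ) z
        (fun x _ => hjU0 x) hω'sum (fun x _ => hz0 x)
      refine le_trans this ?_
      calc ∑ x, jUpd ω ψ x * z x = ∑ x, (if t x = 0 then 0 else ω x) := by
            apply Finset.sum_congr rfl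
            intro x _
            rw [hjU x, hz]
            simp only
            by_cases h : t x = 0
            · simp [h]
            · simp only [h, if_false]
              rw [mul_assoc, mul_inv_cancel₀ h, mul_one]
        _ ≤ ∑ x, ω x := by
            apply Finset.sum_le_sum
            intro x _
            split
            · exact hω0 x
            · exact le_refl _
        _ = 1 := hω1
    have hAB : (∏ x, t x ^ (jUpd ω ψ x)) * (∏ x, z x ^ (jUpd ω ψ x)) = 1 := by
      rw [← Finset.prod_mul_distrib]
      calc ∏ x, t x ^ (jUpd ω ψ x) * z x ^ (jUpd ω ψ x)
          = ∏ x, (t x * z x) ^ (jUpd ω ψ x) := by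
            apply Finset.prod_congr rfl
            intro x _
            rw [Real.mul_rpow (ht0 x) (hz0 x)]
        _ = 1 := by
            apply Finset.prod_eq_one
            intro x _
            by_cases h : t x = 0
            · have : jUpd ω ψ x = 0 := by rw [hjU x, h, mul_zero]
              rw [this, Real.rpow_zero]
            · rw [hz]
              simp only [h, if_false]
              rw [mul_inv_cancel₀ h, Real.one_rpow]
    calc (1:ℝ) = (∏ x, t x ^ (jUpd ω ψ x)) * (∏ x, z x ^ (jUpd ω ψ x)) := hAB.symm
      _ ≤ (∏ x, t x ^ (jUpd ω ψ x)) * 1 := by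
          apply mul_le_mul_of_nonneg_left hB
          exact Finset.prod_nonneg fun x _ => Real.rpow_nonneg (ht0 x) _
      _ = ∏ x, t x ^ (jUpd ω ψ x) := mul_one _
  -- Step 4: raise to the N-th power
  have step4 : (1:ℝ) ≤ ∏ p ∈ s, (A p) ^ (ψ.count p) := by
    have h1 : (1:ℝ) ≤ ∏ p ∈ s, (A p) ^ (r p) := le_trans step3 step2
    have h2 : ((∏ p ∈ s, (A p) ^ (r p)) : ℝ) ^ N = ∏ p ∈ s, (A p) ^ (ψ.count p) := by
      rw [← Finset.prod_pow]
      apply Finset.prod_congr rfl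
      intro p hp
      rw [← Real.rpow_natCast ((A p) ^ (r p)) N, ← Real.rpow_mul (hA0 p hp)]
      rw [hr]
      rw [div_mul_cancel₀ _ hNR.ne']
      exact Real.rpow_natCast _ _
    calc (1:ℝ) = 1 ^ N := (one_pow N).symm
      _ ≤ (∏ p ∈ s, (A p) ^ (r p)) ^ N := pow_le_pow_left₀ zero_le_one h1 N
      _ = _ := h2
  -- Conclude
  rw [jeffreyVal, jeffreyVal]
  apply mul_le_mul_of_nonneg_left _ (by positivity)
  calc ∏ p ∈ s, (val ω p) ^ ψ.count p
      = (∏ p ∈ s, (val ω p) ^ ψ.count p) * 1 := (mul_one _).symm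
    _ ≤ (∏ p ∈ s, (val ω p) ^ ψ.count p) * ∏ p ∈ s, (A p) ^ (ψ.count p) := by
        apply mul_le_mul_of_nonneg_left step4
        exact Finset.prod_nonneg fun p hp => pow_nonneg (hval p (hmem p hp)).le _
    _ = ∏ p ∈ s, (val ω p * A p) ^ ψ.count p := by
        rw [← Finset.prod_mul_distrib]
        exact Finset.prod_congr rfl fun p hp => (mul_pow _ _ _).symm
    _ = ∏ p ∈ s, (val (jUpd ω ψ) p) ^ ψ.count p := by
        exact Finset.prod_congr rfl fun p hp => by rw [hvalU p hp]
end
end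

section
/- Let X be a finite set, ω a distribution on X, and ψ₁, …, ψ_L nonempty finite multisets of factors on X with ω ⊨ p > 0 for every factor p occurring in any ψᵢ. Let n₁, …, n_L be positive natural numbers with n = Σᵢ nᵢ, and let ψ = n₁·ψ₁ + ⋯ + n_L·ψ_L (pointwise scalar multiple and sum of multisets). If all ψᵢ have the same size, then the convex combination of Jeffrey updates equals a single Jeffrey update: (n₁/n)·(ω ⊳_J ψ₁) + ⋯ + (n_L/n)·(ω ⊳_J ψ_L) = ω ⊳_J ψ. -/
noncomputable section

lemma jUpd_eq {X : Type*} [Fintype X] [DecidableEq (X → ℝ)]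
    (ω : X → ℝ) (ψ : Multiset (X → ℝ)) (x : X) :
    jUpd ω ψ x = (ψ.map (fun p => upd ω p x)).sum / (Multiset.card ψ) := by
  rw [Finset.sum_multiset_map_count, jUpd, Finset.sum_div]
  refine Finset.sum_congr rfl fun p _ => ?_
  simp [div_mul_eq_mul_div, mul_comm, mul_div_assoc]

/-- A fractional convex combination of Jeffrey updates is a single Jeffrey
update: `(n₁/n)·(ω ⊳_J ψ₁) + ⋯ + (n_L/n)·(ω ⊳_J ψ_L) = ω ⊳_J (n₁·ψ₁ + ⋯ + n_L·ψ_L)`,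
provided all the `ψᵢ` have the same size. -/
theorem convex_combination_of_jeffrey_updates
    {X : Type*} [Fintype X] [DecidableEq (X → ℝ)]
    (ω : X → ℝ) (L : ℕ) (ψs : Fin L → Multiset (X → ℝ)) (ns : Fin L → ℕ)
    (hω0 : ∀ x, 0 ≤ ω x) (hω1 : ∑ x, ω x = 1)
    (hψ : ∀ i, ψs i ≠ 0)
    (hfac : ∀ i, ∀ p ∈ ψs i, ∀ x, 0 ≤ p x)
    (hval : ∀ i, ∀ p ∈ ψs i, 0 < val ω p)
    (hns : ∀ i, 0 < ns i)
    (hsize : ∀ i j, Multiset.card (ψs i) = Multiset.card (ψs j)) :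
    ∀ x, ∑ i, ((ns i : ℝ) / ((∑ j, ns j : ℕ) : ℝ)) * jUpd ω (ψs i) x
        = jUpd ω (∑ i, ns i • ψs i) x := by
  intro x
  rcases Nat.eq_zero_or_pos L with hL | hL
  · subst hL; simp [jUpd]
  set f : (X → ℝ) → ℝ := fun p => upd ω p x with hf
  set c := Multiset.card (ψs ⟨0, hL⟩) with hcdef
  have hci : ∀ i, Multiset.card (ψs i) = c := fun i => hsize i ⟨0, hL⟩
  have hc : 0 < c := hcdef ▸ Multiset.card_pos.2 (hψ _)
  have hn : 0 < ∑ j, ns j :=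
    Finset.sum_pos (fun i _ => hns i) ⟨⟨0, hL⟩, Finset.mem_univ _⟩
  have hcard : (Multiset.card (∑ i, ns i • ψs i) : ℝ) = (∑ j, ns j : ℕ) * c := by
    have := map_sum (⟨⟨Multiset.card, Multiset.card_zero⟩, Multiset.card_add⟩ :
      Multiset (X → ℝ) →+ ℕ) (fun i => ns i • ψs i) Finset.univ
    simp only [AddMonoidHom.coe_mk, ZeroHom.coe_mk] at this
    rw [this]
    push_cast
    simp only [Multiset.card_nsmul, hci]
    push_cast
    rw [← Finset.sum_mul]
  have hmap : ((∑ i, ns i • ψs i).map f).sum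
      = ∑ i, (ns i : ℝ) * ((ψs i).map f).sum := by
    have h1 : Multiset.map f (∑ i, ns i • ψs i) = ∑ i, Multiset.map f (ns i • ψs i) := by
      exact map_sum (Multiset.mapAddMonoidHom f) (fun i => ns i • ψs i) Finset.univ
    have h2 := map_sum (Multiset.sumAddMonoidHom : Multiset ℝ →+ ℝ)
      (fun i => Multiset.map f (ns i • ψs i)) Finset.univ
    simp only [Multiset.coe_sumAddMonoidHom] at h2
    rw [h1, h2]
    refine Finset.sum_congr rfl fun i _ => ?_
    rw [Multiset.map_nsmul]
    have h3 := map_nsmul (Multiset.sumAddMonoidHom : Multiset ℝ →+ ℝ)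
      (ns i) (Multiset.map f (ψs i))
    simp only [Multiset.coe_sumAddMonoidHom] at h3
    rw [h3, nsmul_eq_mul]
  rw [jUpd_eq, hcard, hmap, Finset.sum_div]
  refine Finset.sum_congr rfl fun i _ => ?_
  rw [jUpd_eq, hci]
  have hn' : ((∑ j, ns j : ℕ) : ℝ) ≠ 0 := by positivity
  have hc' : (c : ℝ) ≠ 0 := by positivity
  field_simp
  rfl
end
end

section
/- Let X be a finite set, ω a distribution on X, and ψ a nonempty finite multiset of factors on X such that the conjunction &ψ has nonzero validity in ω. Then the Pearl update increases Pearl validity: (ω ⊳_P ψ) ⊨_P ψ ≥ ω ⊨_P ψ. -/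
/-!
Updating `ω` with `q = &ψ` reweights it by `q / (ω ⊨ q)`, so `(ω|q) ⊨ q = (ω ⊨ q²) / (ω ⊨ q)`.
By Cauchy–Schwarz (the variance of `q` under `ω` is nonnegative), `(ω ⊨ q)² ≤ ω ⊨ q²`; hence the
validity of `q` can only grow, and the multinomial coefficient of `ψ` is unchanged.
-/

noncomputable section

/-- The Pearl update `ω ⊳_P ψ := ω|(&ψ)`. -/
def pUpd {X : Type*} [Fintype X] [DecidableEq (X → ℝ)]
    (ω : X → ℝ) (ψ : Multiset (X → ℝ)) : X → ℝ :=
  upd ω (conjM ψ)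

section Validity

variable {X : Type*} [Fintype X]

theorem sq_val_le_val_sq {ω : X → ℝ} (hω0 : ∀ x, 0 ≤ ω x) (hω1 : ∑ x, ω x = 1) (q : X → ℝ) :
    val ω q ^ 2 ≤ val ω (q ^ 2) := by
  have h := Finset.sum_sq_le_sum_mul_sum_of_sq_le_mul Finset.univ
    (r := fun x => ω x * q x) (f := ω) (g := fun x => ω x * q x ^ 2)
    (fun x _ => hω0 x) (fun x _ => mul_nonneg (hω0 x) (sq_nonneg _)) (fun x _ => le_of_eq (by ring))
  simpa only [val, hω1, one_mul, Pi.pow_apply] using h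

theorem val_upd_self (ω q : X → ℝ) : val (upd ω q) q = val ω (q ^ 2) / val ω q := by
  simp only [val, upd, Finset.sum_div, Pi.pow_apply]
  exact Finset.sum_congr rfl fun x _ => by ring

theorem val_le_val_upd_self {ω q : X → ℝ} (hω0 : ∀ x, 0 ≤ ω x) (hω1 : ∑ x, ω x = 1)
    (hval : 0 < val ω q) : val ω q ≤ val (upd ω q) q := by
  rw [val_upd_self, le_div_iff₀ hval, ← sq]
  exact sq_val_le_val_sq hω0 hω1 q

end Validity

theorem pearl_update_increases_pearl_validity_general
    {X : Type*} [Fintype X] [DecidableEq (X → ℝ)]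
    (ω : X → ℝ) (ψ : Multiset (X → ℝ))
    (hω0 : ∀ x, 0 ≤ ω x) (hω1 : ∑ x, ω x = 1)
    (hval : 0 < val ω (conjM ψ)) :
    pearlVal ω ψ ≤ pearlVal (pUpd ω ψ) ψ :=
  mul_le_mul_of_nonneg_left (val_le_val_upd_self hω0 hω1 hval) (Nat.cast_nonneg _)

/-- Pearl updating increases Pearl validity. -/
theorem pearl_update_increases_pearl_validity
    {X : Type*} [Fintype X] [DecidableEq (X → ℝ)]
    (ω : X → ℝ) (ψ : Multiset (X → ℝ))
    (hω0 : ∀ x, 0 ≤ ω x) (hω1 : ∑ x, ω x = 1)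
    (hψ : ψ ≠ 0)
    (hfac : ∀ p ∈ ψ, ∀ x, 0 ≤ p x)
    (hval : 0 < val ω (conjM ψ)) :
    pearlVal ω ψ ≤ pearlVal (pUpd ω ψ) ψ :=
  pearl_update_increases_pearl_validity_general ω ψ hω0 hω1 hval
end
end

section
/- Let X be a finite set, ω a distribution on X, and ψ, χ finite multisets of factors on X such that ω ⊨ &ψ > 0 and ω ⊨ &(ψ + χ) > 0. Then Pearl updates compose and are insensitive to order: (ω ⊳_P ψ) ⊳_P χ = ω ⊳_P (ψ + χ) = (ω ⊳_P χ) ⊳_P ψ. -/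
noncomputable section

lemma conjM_eq_map_prod {X : Type*} [DecidableEq (X → ℝ)] (ψ : Multiset (X → ℝ)) (x : X) :
    conjM ψ x = (ψ.map (fun p => p x)).prod := by
  rw [conjM, Finset.prod_multiset_map_count]

lemma conjM_add {X : Type*} [DecidableEq (X → ℝ)] (ψ χ : Multiset (X → ℝ)) (x : X) :
    conjM (ψ + χ) x = conjM ψ x * conjM χ x := by
  simp [conjM_eq_map_prod]

lemma conjM_nonneg {X : Type*} [DecidableEq (X → ℝ)] (ψ : Multiset (X → ℝ))
    (h : ∀ p ∈ ψ, ∀ x, 0 ≤ p x) (x : X) : 0 ≤ conjM ψ x := by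
  rw [conjM_eq_map_prod]
  apply Multiset.prod_nonneg
  intro a ha
  obtain ⟨p, hp, rfl⟩ := Multiset.mem_map.mp ha
  exact h p hp x

lemma upd_upd {X : Type*} [Fintype X] (ω p q : X → ℝ)
    (hp : val ω p ≠ 0) (hr : val ω (fun x => p x * q x) ≠ 0) :
    upd (upd ω p) q = upd ω (fun x => p x * q x) := by
  have hval : val (upd ω p) q = val ω (fun x => p x * q x) / val ω p := by
    simp only [val, upd]
    rw [Finset.sum_div]
    exact Finset.sum_congr rfl fun x _ => by rw [div_mul_eq_mul_div, mul_assoc]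
  funext x
  simp only [upd, hval]
  field_simp

/-- Pearl updates compose and are insensitive to the order of updating:
`(ω ⊳_P ψ) ⊳_P χ = ω ⊳_P (ψ + χ) = (ω ⊳_P χ) ⊳_P ψ`. -/
theorem pearl_updates_compose_and_commute
    {X : Type*} [Fintype X] [DecidableEq (X → ℝ)]
    (ω : X → ℝ) (ψ χ : Multiset (X → ℝ))
    (hω0 : ∀ x, 0 ≤ ω x) (hω1 : ∑ x, ω x = 1)
    (hfac : ∀ p ∈ ψ + χ, ∀ x, 0 ≤ p x)
    (hψ : 0 < val ω (conjM ψ))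
    (hψχ : 0 < val ω (conjM (ψ + χ))) :
    pUpd (pUpd ω ψ) χ = pUpd ω (ψ + χ) ∧ pUpd (pUpd ω χ) ψ = pUpd ω (ψ + χ) := by
  set p := conjM ψ with hpdef
  set q := conjM χ with hqdef
  have hp0 : ∀ x, 0 ≤ p x :=
    conjM_nonneg ψ (fun r hr => hfac r (Multiset.mem_add.mpr (Or.inl hr))) 
  have hq0 : ∀ x, 0 ≤ q x :=
    conjM_nonneg χ (fun r hr => hfac r (Multiset.mem_add.mpr (Or.inr hr)))
  have hradd : ∀ x, conjM (ψ + χ) x = p x * q x := conjM_add ψ χ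
  have hrval : val ω (conjM (ψ + χ)) = val ω (fun x => p x * q x) := by
    unfold val; apply Finset.sum_congr rfl; intro x _; rw [hradd x]
  have hrpos : 0 < val ω (fun x => p x * q x) := hrval ▸ hψχ
  -- find a point with positive mass
  obtain ⟨x0, -, hx0⟩ : ∃ x ∈ Finset.univ, 0 < ω x * (p x * q x) := by
    by_contra h
    push_neg at h
    have : val ω (fun x => p x * q x) = 0 := by
      unfold val
      apply Finset.sum_eq_zero
      intro x hx
      have h1 : 0 ≤ ω x * (p x * q x) :=
        mul_nonneg (hω0 x) (mul_nonneg (hp0 x) (hq0 x))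
      show ω x * (p x * q x) = 0
      exact le_antisymm (h x hx) h1
    linarith
  have hω0' : 0 < ω x0 ∧ 0 < p x0 * q x0 := by
    rcases mul_pos_iff.mp hx0 with h | h
    · exact h
    · exact absurd h.1 (not_lt.mpr (hω0 x0))
  have hqx0 : 0 < q x0 := by
    rcases mul_pos_iff.mp hω0'.2 with h | h
    · exact h.2
    · exact absurd h.1 (not_lt.mpr (hp0 x0))
  have hq : 0 < val ω q := by
    have : ω x0 * q x0 ≤ val ω q :=
      Finset.single_le_sum (f := fun x => ω x * q x)
        (fun x _ => mul_nonneg (hω0 x) (hq0 x)) (Finset.mem_univ x0)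
    nlinarith [hω0'.1]
  have hqpval : val ω (fun x => q x * p x) = val ω (fun x => p x * q x) := by
    unfold val; apply Finset.sum_congr rfl; intro x _; ring
  constructor
  · show upd (upd ω p) q = upd ω (conjM (ψ + χ))
    rw [upd_upd ω p q hψ.ne' hrpos.ne']
    funext x
    simp only [upd, hrval, hradd]
  · show upd (upd ω q) p = upd ω (conjM (ψ + χ))
    rw [upd_upd ω q p hq.ne' (hqpval ▸ hrpos.ne')]
    funext x
    simp only [upd, hrval, hqpval, hradd]
    ring
end
end

section
/- Let X be a finite set, ω a distribution on X, q a factor on X, and K ≥ 1 a natural number, with ω ⊨ q > 0 and ω ⊨ q^K > 0, where q^K(x) = q(x)^K. Then (ω ⊨ q^K) ≤ (ω|q ⊨ q^K) ≤ (ω|q^K ⊨ q^K). In particular, applied with q the fractional conjunction of evidence ψ of size K (so that q^K = &ψ), this yields ω ⊨_P ψ ≤ (ω ⊳_F ψ) ⊨_P ψ ≤ (ω ⊳_P ψ) ⊨_P ψ: the VFE update increases Pearl validity, but not by more than the Pearl update does. -/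
noncomputable section

lemma pow_sub_mul_pow_sub_nonneg {a b : ℝ} (ha : 0 ≤ a) (hb : 0 ≤ b) (m n : ℕ) :
    0 ≤ (a ^ m - b ^ m) * (a ^ n - b ^ n) := by
  rcases le_total a b with h | h
  · exact mul_nonneg_of_nonpos_of_nonpos (sub_nonpos.2 (pow_le_pow_left₀ ha h m))
      (sub_nonpos.2 (pow_le_pow_left₀ ha h n))
  · exact mul_nonneg (sub_nonneg.2 (pow_le_pow_left₀ hb h m))
      (sub_nonneg.2 (pow_le_pow_left₀ hb h n))

lemma cheb {X : Type*} [Fintype X] (μ f g : X → ℝ) (hμ : ∀ x, 0 ≤ μ x)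
    (h : ∀ x y, 0 ≤ (f x - f y) * (g x - g y)) :
    (∑ x, μ x * f x) * (∑ x, μ x * g x) ≤ (∑ x, μ x) * ∑ x, μ x * (f x * g x) := by
  have h0 : 0 ≤ ∑ x : X, ∑ y : X, μ x * μ y * ((f x - f y) * (g x - g y)) :=
    Finset.sum_nonneg fun x _ => Finset.sum_nonneg fun y _ =>
      mul_nonneg (mul_nonneg (hμ x) (hμ y)) (h x y)
  have heq : ∑ x : X, ∑ y : X, μ x * μ y * ((f x - f y) * (g x - g y))
      = (∑ x, μ x) * (∑ x, μ x * (f x * g x)) - (∑ x, μ x * f x) * (∑ x, μ x * g x)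
        - (∑ x, μ x * g x) * (∑ x, μ x * f x) + (∑ x, μ x * (f x * g x)) * (∑ x, μ x) := by
    rw [Finset.sum_mul_sum, Finset.sum_mul_sum, Finset.sum_mul_sum, Finset.sum_mul_sum,
      ← Finset.sum_sub_distrib, ← Finset.sum_sub_distrib, ← Finset.sum_add_distrib]
    refine Finset.sum_congr rfl fun x _ => ?_
    rw [← Finset.sum_sub_distrib, ← Finset.sum_sub_distrib, ← Finset.sum_add_distrib]
    exact Finset.sum_congr rfl fun y _ => by ring
  nlinarith [h0, heq]

lemma val_upd {X : Type*} [Fintype X] (ω p r : X → ℝ) :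
    val (upd ω p) r = (∑ x, ω x * p x * r x) / val ω p := by
  simp only [val, upd, Finset.sum_div]
  exact Finset.sum_congr rfl fun x _ => by ring

/-- Sandwich inequalities: `(ω ⊨ q^K) ≤ (ω|q ⊨ q^K) ≤ (ω|q^K ⊨ q^K)`.  In
particular, when `q` is the fractional conjunction of evidence `ψ` of size `K`
(so that `q^K = &ψ`), the VFE update `ω|q` increases Pearl validity, but not by
more than the Pearl update `ω|(&ψ)` does. -/
theorem vfe_update_increases_pearl_validity_le_pearl_update
    {X : Type*} [Fintype X] [DecidableEq (X → ℝ)]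
    (ω q : X → ℝ) (K : ℕ)
    (hω0 : ∀ x, 0 ≤ ω x) (hω1 : ∑ x, ω x = 1)
    (hq : ∀ x, 0 ≤ q x) (hK : 1 ≤ K)
    (hvq : 0 < val ω q) (hvqK : 0 < val ω (fun x => q x ^ K)) :
    (val ω (fun x => q x ^ K) ≤ val (upd ω q) (fun x => q x ^ K) ∧
      val (upd ω q) (fun x => q x ^ K)
        ≤ val (upd ω (fun x => q x ^ K)) (fun x => q x ^ K)) ∧
    ∀ ψ : Multiset (X → ℝ), ψ ≠ 0 → Multiset.card ψ = K →
      (∀ p ∈ ψ, ∀ x, 0 ≤ p x) →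
      (∀ x, q x = ∏ p ∈ ψ.toFinset, p x ^ ((ψ.count p : ℝ) / (K : ℝ))) →
      pearlVal ω ψ ≤ pearlVal (upd ω q) ψ ∧
        pearlVal (upd ω q) ψ ≤ pearlVal (upd ω (conjM ψ)) ψ := by
  obtain ⟨K', rfl⟩ : ∃ K', K = K' + 1 := ⟨K - 1, (Nat.succ_pred_eq_of_pos hK).symm⟩
  -- part 1a
  have h1a : val ω (fun x => q x ^ (K'+1)) ≤ val (upd ω q) (fun x => q x ^ (K'+1)) := by
    rw [val_upd, le_div_iff₀ hvq]
    have hch := cheb ω q (fun x => q x ^ (K'+1)) hω0 (fun x y => by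
      simpa using pow_sub_mul_pow_sub_nonneg (hq x) (hq y) 1 (K'+1))
    rw [hω1, one_mul] at hch
    calc val ω (fun x => q x ^ (K'+1)) * val ω q
        = (∑ x, ω x * q x) * (∑ x, ω x * q x ^ (K'+1)) := by rw [val, val]; ring
      _ ≤ ∑ x, ω x * (q x * q x ^ (K'+1)) := hch
      _ = ∑ x, ω x * q x * q x ^ (K'+1) := Finset.sum_congr rfl fun x _ => by ring
  -- part 1b
  have h1b : val (upd ω q) (fun x => q x ^ (K'+1))
      ≤ val (upd ω (fun x => q x ^ (K'+1))) (fun x => q x ^ (K'+1)) := by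
    rw [val_upd, val_upd, div_le_div_iff₀ hvq hvqK]
    have hch := cheb (fun x => ω x * q x) (fun x => q x ^ K') (fun x => q x ^ (K'+1))
      (fun x => mul_nonneg (hω0 x) (hq x))
      (fun x y => pow_sub_mul_pow_sub_nonneg (hq x) (hq y) K' (K'+1))
    calc (∑ x, ω x * q x * q x ^ (K'+1)) * val ω (fun x => q x ^ (K'+1))
        = (∑ x, ω x * q x * q x ^ K') * (∑ x, ω x * q x * q x ^ (K'+1)) := by
          rw [val]
          rw [show (∑ x, ω x * q x ^ (K'+1)) = ∑ x, ω x * q x * q x ^ K' from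
            Finset.sum_congr rfl fun x _ => by ring]
          ring
      _ ≤ (∑ x, ω x * q x) * ∑ x, ω x * q x * (q x ^ K' * q x ^ (K'+1)) := hch
      _ = (∑ x, ω x * q x ^ (K'+1) * q x ^ (K'+1)) * val ω q := by
          rw [val]
          rw [show (∑ x, ω x * q x * (q x ^ K' * q x ^ (K'+1)))
              = ∑ x, ω x * q x ^ (K'+1) * q x ^ (K'+1) from
            Finset.sum_congr rfl fun x _ => by ring]
          ring
  refine ⟨⟨h1a, h1b⟩, fun ψ hψ0 hcard hψp hqdef => ?_⟩
  have hconj : conjM ψ = fun x => q x ^ (K' + 1) := by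
    funext x
    rw [hqdef x, ← Finset.prod_pow]
    refine Finset.prod_congr rfl fun p hp => ?_
    have hpx : 0 ≤ p x := hψp p (Multiset.mem_toFinset.mp hp) x
    have hKne : ((K' + 1 : ℕ) : ℝ) ≠ 0 := by positivity
    rw [← Real.rpow_natCast (p x ^ ((ψ.count p : ℝ) / ((K' + 1 : ℕ) : ℝ))) (K' + 1),
      ← Real.rpow_mul hpx, div_mul_cancel₀ _ hKne, Real.rpow_natCast]
  have hC : (0:ℝ) ≤ (Nat.multinomial ψ.toFinset ψ.count : ℝ) := Nat.cast_nonneg _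
  constructor
  · unfold pearlVal
    rw [hconj]
    exact mul_le_mul_of_nonneg_left h1a hC
  · unfold pearlVal
    rw [hconj]
    exact mul_le_mul_of_nonneg_left h1b hC
end
end
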